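/- Soundness of generalisation constraints: if a hypothesis H is inconsistent with respect to negative examples E⁻ and background knowledge B (i.e., there exists e⁻ ∈ E⁻ with B ∪ H ⊨ e⁻), then no generalisation G of H (i.e., no clausal theory G with G ⪯ H) is a solution, where a solution is a hypothesis that is complete (∀e ∈ E⁺, B ∪ G ⊨ e) and consistent (∀e ∈ E⁻, B ∪ G ⊭ e). -/

import Mathlib

/-!
Subsumption is sound: if `C₁θ ⊆ C₂`, then every model of `C₁` is a model of `C₂` (evaluate `C₁`
at the valuation `x ↦ ⟦θ x⟧ v`). Hence every model of `B ∪ G` is a model of `B ∪ H`, so `B ∪ G`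
entails the negative example that `B ∪ H` entails.
-/

open FirstOrder FirstOrder.Language

/-- A literal: a signed (positive or negative) atomic `L`-formula, given by a relation
symbol applied to terms with free variables in `V`. -/
structure Lit (L : Language) (V : Type*) where
  pos : Bool
  n : ℕ
  rel : L.Relations n
  args : Fin n → L.Term V

noncomputable instance {L : Language} {V : Type*} : DecidableEq (Lit L V) :=
  Classical.decEq _

/-- Apply a substitution `θ` (a map from variables to `L`-terms) to a literal. -/
def Lit.subst {L : Language} {V : Type*} (l : Lit L V) (θ : V → L.Term V) : Lit L V :=
  ⟨l.pos, l.n, l.rel, fun i => (l.args i).subst θ⟩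

/-- Realization (truth) of a literal in structure `M` under valuation `v`. -/
def Lit.Realize {L : Language} {V : Type*} (M : Type*) [L.Structure M]
    (l : Lit L V) (v : V → M) : Prop :=
  if l.pos then Structure.RelMap l.rel (fun i => (l.args i).realize v)
  else ¬ Structure.RelMap l.rel (fun i => (l.args i).realize v)

/-- A clause: a finite set of literals. -/
abbrev Clause (L : Language) (V : Type*) := Finset (Lit L V)

/-- Clause `C₁` subsumes clause `C₂` iff there is a substitution `θ` with `C₁θ ⊆ C₂`. -/
def Clause.Subsumes {L : Language} {V : Type*} (C₁ C₂ : Clause L V) : Prop :=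
  ∃ θ : V → L.Term V, ∀ l ∈ C₁, l.subst θ ∈ C₂

/-- Semantics of a clause: the universal closure of the disjunction of its literals. -/
def Clause.Realize {L : Language} {V : Type*} (M : Type*) [L.Structure M]
    (C : Clause L V) : Prop :=
  ∀ v : V → M, ∃ l ∈ C, l.Realize M v

/-- Theory subsumption `T₁ ⪯ T₂`: every clause of `T₂` is subsumed by some clause of `T₁`. -/
def TheorySubsumes {L : Language} {V : Type*} (T₁ T₂ : Finset (Clause L V)) : Prop :=
  ∀ C₂ ∈ T₂, ∃ C₁ ∈ T₁, Clause.Subsumes C₁ C₂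

/-- `M` is a model of a set of clauses `S`. -/
def Models {L : Language} {V : Type*} (M : Type*) [L.Structure M]
    (S : Set (Clause L V)) : Prop :=
  ∀ C ∈ S, Clause.Realize M C

/-- A ground atom: a relation symbol applied to variable-free terms. -/
structure GAtom (L : Language) where
  n : ℕ
  rel : L.Relations n
  args : Fin n → L.Term Empty

/-- Truth of a ground atom in a structure. -/
def GAtom.Realize {L : Language} (M : Type*) [L.Structure M] (e : GAtom L) : Prop :=
  Structure.RelMap e.rel fun i => (e.args i).realize (Empty.elim : Empty → M)

/-- A set of clauses `S` entails a ground atom `e`: every model of `S` satisfies `e`. -/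
def Entails {L : Language} {V : Type*} (S : Set (Clause L V)) (e : GAtom L) : Prop :=
  ∀ (M : Type*) [L.Structure M], Models M S → GAtom.Realize M e

/-- `P` is a sub-program of `Q` (programs are finite multisets of clauses). -/
inductive SubProgram {L : Language} {V : Type*} :
    Multiset (Clause L V) → Multiset (Clause L V) → Prop
  | empty (Q : Multiset (Clause L V)) : SubProgram 0 Q
  | step {P Q : Multiset (Clause L V)} {Cp Cq : Clause L V} :
      Cp ∈ P → Cq ∈ Q → Cp ⊆ Cq →
      SubProgram (P.erase Cp) (Q.erase Cq) → SubProgram P Q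

/-- A set of clauses `S` entails a sentence `e`: every model of `S` satisfies `e`. -/
def EntailsSentence {L : Language} {V : Type*} (S : Set (Clause L V))
    (e : L.Sentence) : Prop :=
  ∀ (M : Type*) [L.Structure M], Models M S → M ⊨ e

theorem Lit.realize_subst {L : Language} {V : Type*} {M : Type*} [L.Structure M]
    (l : Lit L V) (θ : V → L.Term V) (v : V → M) :
    (l.subst θ).Realize M v ↔ l.Realize M fun x => (θ x).realize v := by
  simp only [Lit.Realize, Lit.subst, Term.realize_subst]

theorem Clause.Subsumes.realize {L : Language} {V : Type*} {M : Type*} [L.Structure M]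
    {C₁ C₂ : Clause L V} (h : C₁.Subsumes C₂) (hC₁ : C₁.Realize M) : C₂.Realize M := by
  obtain ⟨θ, hθ⟩ := h
  intro v
  obtain ⟨l, hl, hlv⟩ := hC₁ fun x => (θ x).realize v
  exact ⟨l.subst θ, hθ l hl, (l.realize_subst θ v).2 hlv⟩

theorem models_union {L : Language} {V : Type*} {M : Type*} [L.Structure M]
    {S T : Set (Clause L V)} : Models M (S ∪ T) ↔ Models M S ∧ Models M T := by
  simp only [Models, Set.mem_union, or_imp, forall_and]

theorem TheorySubsumes.models {L : Language} {V : Type*} {M : Type*} [L.Structure M]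
    {G H : Finset (Clause L V)} (hGH : TheorySubsumes G H)
    (hG : Models M (G : Set (Clause L V))) :
    Models M (H : Set (Clause L V)) := fun C hC =>
  let ⟨C₁, hC₁G, hC₁C⟩ := hGH C hC
  hC₁C.realize (hG C₁ hC₁G)

theorem Entails.of_theorySubsumes {L : Language} {V : Type*} {B : Set (Clause L V)}
    {G H : Finset (Clause L V)} {e : GAtom L} (hH : Entails (B ∪ ↑H) e)
    (hGH : TheorySubsumes G H) : Entails (B ∪ ↑G) e := by
  intro M _ hM
  obtain ⟨hB, hG⟩ := models_union.1 hM
  exact hH M (models_union.2 ⟨hB, hGH.models hG⟩)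

/-- Soundness of generalisation constraints: if `H` is inconsistent
(some `e⁻ ∈ E⁻` has `B ∪ H ⊨ e⁻`), then no generalisation `G` of `H` is a solution. -/
theorem generalisation_constraint_sound {L : Language} {V : Type*}
    (B : Set (Clause L V)) (Epos Eneg : Set (GAtom L)) (H : Finset (Clause L V))
    (hinconsistent : ∃ e ∈ Eneg, Entails (B ∪ ↑H) e) :
    ∀ G : Finset (Clause L V), TheorySubsumes G H →
      ¬ ((∀ e ∈ Epos, Entails (B ∪ ↑G) e) ∧ (∀ e ∈ Eneg, ¬ Entails (B ∪ ↑G) e)) := by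
  rintro G hGH ⟨-, hconsistent⟩
  obtain ⟨e, he, hHe⟩ := hinconsistent
  exact hconsistent e he (hHe.of_theorySubsumes hGH)
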